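/- Let n ≥ 2 be an integer and let U, V ⊆ ℤ^d be translation respecting sets with |T_U| > 1, |T_V| > 1 and U ⊆ V. Then: (a) if the complements of any two distinct members of T_U are disjoint, then the complements of any two distinct members of T_V are disjoint; and (b) if any two distinct members of T_V are disjoint, then any two distinct members of T_U are disjoint. -/

import Mathlib

namespace P3C

def latticeGraph (d : ℕ) : SimpleGraph (Fin d → ℤ) where
  Adj v w := ∃ i, (w i = v i + 1 ∨ w i = v i - 1) ∧ ∀ j, j ≠ i → w j = v j
  symm := ⟨by
    rintro v w ⟨i, h1, h2⟩
    exact ⟨i, by omega, fun j hj => (h2 j hj).symm⟩⟩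
  loopless := ⟨by
    rintro v ⟨i, h1, _⟩
    omega⟩

def vplus (d : ℕ) (U : Set (Fin d → ℤ)) : Set (Fin d → ℤ) :=
  {u | u ∈ U ∨ ∃ w ∈ U, (latticeGraph d).Adj u w}

def vminus (d : ℕ) (U : Set (Fin d → ℤ)) : Set (Fin d → ℤ) :=
  {u | u ∈ U ∧ ∀ w, (latticeGraph d).Adj u w → w ∈ U}

def inBdry (d : ℕ) (U : Set (Fin d → ℤ)) : Set (Fin d → ℤ) := U \ vminus d U

def outBdry (d : ℕ) (U : Set (Fin d → ℤ)) : Set (Fin d → ℤ) := vplus d U \ U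

def ConnectedIn {V : Type*} (G : SimpleGraph V) (S : Set V) : Prop := (G.induce S).Connected

def BiConnected (d : ℕ) (U : Set (Fin d → ℤ)) : Prop :=
  U ≠ ∅ ∧ U ≠ Set.univ ∧ ConnectedIn (latticeGraph d) U ∧ ConnectedIn (latticeGraph d) Uᶜ

def edgeBdry (d : ℕ) (U : Set (Fin d → ℤ)) : Set ((Fin d → ℤ) × (Fin d → ℤ)) :=
  {p | (latticeGraph d).Adj p.1 p.2 ∧ ((p.1 ∈ U ∧ p.2 ∉ U) ∨ (p.2 ∈ U ∧ p.1 ∉ U))}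

def IsFourCycle (d : ℕ) (v00 v01 v11 v10 : Fin d → ℤ) : Prop :=
  (latticeGraph d).Adj v00 v01 ∧ (latticeGraph d).Adj v01 v11 ∧
  (latticeGraph d).Adj v11 v10 ∧ (latticeGraph d).Adj v10 v00 ∧ v00 ≠ v11 ∧ v01 ≠ v10

def BoundaryDisjoint (d : ℕ) (U1 U2 : Set (Fin d → ℤ)) : Prop :=
  edgeBdry d U1 ∩ edgeBdry d U2 = ∅ ∧
  ¬ ∃ v00 v01 v11 v10, IsFourCycle d v00 v01 v11 v10 ∧
    v00 ∈ U1ᶜ ∩ U2ᶜ ∧ v01 ∈ U1ᶜ ∩ U2 ∧ v11 ∈ U1 ∩ U2 ∧ v10 ∈ U1 ∩ U2ᶜ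

def translates (n d : ℕ) (U : Set (Fin d → ℤ)) : Set (Set (Fin d → ℤ)) :=
  {W | ∃ x : Fin d → ℤ, (∀ i, (n : ℤ) ∣ x i) ∧ W = (fun u => u + x) '' U}

def TranslationRespecting (n d : ℕ) (U : Set (Fin d → ℤ)) : Prop :=
  BiConnected d U ∧
  ∀ U1 ∈ translates n d U, ∀ U2 ∈ translates n d U, U1 ≠ U2 → BoundaryDisjoint d U1 U2

def TypeZero (n d : ℕ) (U : Set (Fin d → ℤ)) : Prop :=
  TranslationRespecting n d U ∧ (translates n d U).Nontrivial ∧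
  ∀ A ∈ translates n d U, ∀ B ∈ translates n d U, A ⊆ B ∨ B ⊆ A

noncomputable def setDist (d : ℕ) (A B : Set (Fin d → ℤ)) : ℕ :=
  sInf {k | ∃ a ∈ A, ∃ b ∈ B, (latticeGraph d).dist a b = k}

def IsLatticeHHF (d : ℕ) (h : (Fin d → ℤ) → ℤ) : Prop :=
  ∀ v w, (latticeGraph d).Adj v w → |h v - h w| = 1

def homZeroLattice (d : ℕ) : Set ((Fin d → ℤ) → ℤ) :=
  {h | IsLatticeHHF d h ∧ h 0 = 0}

def IsQP (n d : ℕ) (m : Fin d → ℤ) (h : (Fin d → ℤ) → ℤ) : Prop :=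
  h ∈ homZeroLattice d ∧ ∀ (v : Fin d → ℤ) (i : Fin d), h (v + Pi.single i (n : ℤ)) = h v + m i

def QPset (n d : ℕ) : Set ((Fin d → ℤ) → ℤ) :=
  {h | ∃ m : Fin d → ℤ, (∀ i, (6 : ℤ) ∣ m i ∧ |m i| ≤ (n : ℤ)) ∧ IsQP n d m h}

def compIn {V : Type*} (G : SimpleGraph V) (S : Set V) (u : V) : Set V :=
  {w | ∃ (hu : u ∈ S) (hw : w ∈ S), (G.induce S).Reachable ⟨u, hu⟩ ⟨w, hw⟩}

def subLL (d : ℕ) (h : (Fin d → ℤ) → ℤ) (k : ℤ) (u : Fin d → ℤ) : Set (Fin d → ℤ) :=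
  compIn (latticeGraph d) {w | h w ≠ k + 1} u

def subLC (d : ℕ) (h : (Fin d → ℤ) → ℤ) (k : ℤ) (u v : Fin d → ℤ) : Set (Fin d → ℤ) :=
  (compIn (latticeGraph d) (subLL d h k u)ᶜ v)ᶜ

def IsSublevelComponent (d : ℕ) (h : (Fin d → ℤ) → ℤ) (A : Set (Fin d → ℤ)) : Prop :=
  ∃ u v k, h u ≤ k ∧ k < h v ∧ A = subLC d h k u v

def sepComps (d : ℕ) (h : (Fin d → ℤ) → ℤ) (u v : Fin d → ℤ) : Set (Set (Fin d → ℤ)) :=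
  {A | IsSublevelComponent d h A ∧ u ∈ A ∧ v ∉ A}

def cycleEdge (d : ℕ) (v00 v01 v11 v10 : Fin d → ℤ) (e : (Fin d → ℤ) × (Fin d → ℤ)) : Prop :=
  ({e.1, e.2} : Set (Fin d → ℤ)) = {v00, v01} ∨ ({e.1, e.2} : Set (Fin d → ℤ)) = {v01, v11} ∨
  ({e.1, e.2} : Set (Fin d → ℤ)) = {v11, v10} ∨ ({e.1, e.2} : Set (Fin d → ℤ)) = {v10, v00}

def bdryGraph (d : ℕ) (U : Set (Fin d → ℤ)) : SimpleGraph (Fin d → ℤ) where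
  Adj u v := u ≠ v ∧ ∃ eu ev, eu ∈ edgeBdry d U ∧ ev ∈ edgeBdry d U ∧
    (u = eu.1 ∨ u = eu.2) ∧ (v = ev.1 ∨ v = ev.2) ∧
    ∃ a b c e, IsFourCycle d a b c e ∧ cycleEdge d a b c e eu ∧ cycleEdge d a b c e ev
  symm := ⟨by
    rintro u v ⟨hne, eu, ev, h1, h2, h3, h4, a, b, c, e, hc, hcu, hcv⟩
    exact ⟨hne.symm, ev, eu, h2, h1, h4, h3, a, b, c, e, hc, hcv, hcu⟩⟩
  loopless := ⟨fun u h => h.1 rfl⟩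

/-! Torus definitions -/

def torusAdj (n d : ℕ) (v w : Fin d → ZMod n) : Prop :=
  ∃ i, (w i = v i + 1 ∨ w i = v i - 1) ∧ ∀ j, j ≠ i → w j = v j

def IsProperColoring (n d : ℕ) (f : (Fin d → ZMod n) → Fin 3) : Prop :=
  ∀ v w, torusAdj n d v w → f v ≠ f w

def torusColorings (n d : ℕ) : Set ((Fin d → ZMod n) → Fin 3) :=
  {f | IsProperColoring n d f}

def colZero (n d : ℕ) : Set ((Fin d → ZMod n) → Fin 3) :=
  {f | IsProperColoring n d f ∧ f 0 = 0}

def IsTorusHHF (n d : ℕ) (h : (Fin d → ZMod n) → ℤ) : Prop :=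
  ∀ v w, torusAdj n d v w → |h v - h w| = 1

def torusHomZero (n d : ℕ) : Set ((Fin d → ZMod n) → ℤ) :=
  {h | IsTorusHHF n d h ∧ h 0 = 0}

noncomputable def cp (n d : ℕ) (par : ℕ) (k : Fin 3) (f : (Fin d → ZMod n) → Fin 3) : ℝ :=
  (Nat.card {v : Fin d → ZMod n | (∑ j, (v j).val) % 2 = par ∧ f v = k} : ℝ) /
  (Nat.card {v : Fin d → ZMod n | (∑ j, (v j).val) % 2 = par} : ℝ)

def latticeProj (n d : ℕ) (v : Fin d → ℤ) : Fin d → ZMod n := fun i => (v i : ZMod n)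

def toCol (n d : ℕ) (h : (Fin d → ℤ) → ℤ) (x : Fin d → ZMod n) : Fin 3 :=
  ⟨(h (fun i => ((x i).val : ℤ)) % 3).toNat, by
    have h1 : (0 : ℤ) ≤ h (fun i => ((x i).val : ℤ)) % 3 := Int.emod_nonneg _ (by norm_num)
    have h2 : h (fun i => ((x i).val : ℤ)) % 3 < 3 := Int.emod_lt_of_pos _ (by norm_num)
    omega⟩

end P3C

/-!
Part (a) is part (b) for the complements `Vᶜ ⊆ Uᶜ`, which are again translation respecting.

For (b), let `x + U ≠ y + U` meet. Then `x + V` and `y + V` meet, hence coincide. Number the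
four quadrants of two boundary-disjoint sets `A`, `B` cyclically in `ZMod 4`: boundary
disjointness says this code jumps by at most `±1` along edges and winds around no square, so,
the square complex of `ℤ^d` being simply connected, it lifts to an integer height. On each of the
connected sets `A`, `Aᶜ`, `B`, `Bᶜ` only two consecutive codes occur, so going once around the
four quadrants would raise the height by four; hence one quadrant is empty. Here
`(x + U ∪ y + U)ᶜ ⊇ (x + V)ᶜ ≠ ∅`, so say `x + U ⊆ y + U`. The translates of `x + U` by the
multiples of `y - x` then form an increasing chain whose consecutive members are boundary
disjoint; it exhausts `ℤ^d` but stays inside the `(y - x)`-periodic set `x + V ≠ ℤ^d`.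
-/

theorem SimpleGraph.Reachable.eq_of_forall_adj {V β : Type*} {G : SimpleGraph V} {f : V → β}
    (hf : ∀ u v, G.Adj u v → f u = f v) {u v : V} (h : G.Reachable u v) : f u = f v := by
  obtain ⟨p⟩ := h
  induction p with
  | nil => rfl
  | cons hadj _ ih => exact (hf _ _ hadj).trans ih

theorem Int.natAbs_add_neg_sign {a : ℤ} (ha : a ≠ 0) : (a + -a.sign).natAbs + 1 = a.natAbs := by
  rcases lt_or_gt_of_ne ha with h | h
  · rw [Int.sign_eq_neg_one_of_neg h]; omega
  · rw [Int.sign_eq_one_of_pos h]; omega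

theorem Int.neg_sign_eq_one_or_neg_one {a : ℤ} (ha : a ≠ 0) : -a.sign = 1 ∨ -a.sign = -1 := by
  rcases lt_or_gt_of_ne ha with h | h
  · rw [Int.sign_eq_neg_one_of_neg h]; omega
  · rw [Int.sign_eq_one_of_pos h]; omega

theorem Int.sign_add_eq_of_natAbs_add {a s : ℤ} (hs : s = 1 ∨ s = -1)
    (h : (a + s).natAbs = a.natAbs + 1) : (a + s).sign = s := by
  rcases hs with rfl | rfl
  · exact Int.sign_eq_one_of_pos (by omega)
  · exact Int.sign_eq_neg_one_of_neg (by omega)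

namespace P3C

open scoped Pointwise

variable {d : ℕ}

theorem latticeGraph_adj_iff {u v : Fin d → ℤ} :
    (latticeGraph d).Adj u v ↔ ∃ i s, (s = 1 ∨ s = -1) ∧ v = u + Pi.single i s := by
  constructor
  · rintro ⟨i, hi, hj⟩
    refine ⟨i, v i - u i, by omega, funext fun j => ?_⟩
    by_cases h : j = i
    · subst h; simp
    · simp [hj j h, h]
  · rintro ⟨i, s, hs, rfl⟩
    refine ⟨i, by simp only [Pi.add_apply, Pi.single_eq_same]; omega, fun j hj => ?_⟩
    simp [hj]

theorem latticeGraph_adj_vadd_iff {x u v : Fin d → ℤ} :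
    (latticeGraph d).Adj (x +ᵥ u) (x +ᵥ v) ↔ (latticeGraph d).Adj u v := by
  simp only [latticeGraph_adj_iff, vadd_eq_add, add_assoc, add_right_inj]

theorem latticeGraph_adj_add_single (u : Fin d → ℤ) (i : Fin d) {s : ℤ} (hs : s = 1 ∨ s = -1) :
    (latticeGraph d).Adj u (u + Pi.single i s) :=
  latticeGraph_adj_iff.mpr ⟨i, s, hs, rfl⟩

def normL1 (v : Fin d → ℤ) : ℕ := ∑ i, (v i).natAbs

theorem normL1_add_single (v : Fin d → ℤ) (i : Fin d) (s : ℤ) :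
    normL1 (v + Pi.single i s) + (v i).natAbs = normL1 v + (v i + s).natAbs := by
  simp only [normL1, ← Finset.add_sum_erase _ _ (Finset.mem_univ i), Pi.add_apply,
    Pi.single_eq_same]
  rw [Finset.sum_congr rfl fun j hj => by rw [Pi.single_eq_of_ne (Finset.ne_of_mem_erase hj),
    add_zero]]
  ring

theorem normL1_eq_zero {v : Fin d → ℤ} : normL1 v = 0 ↔ v = 0 := by
  simp [normL1, funext_iff]

theorem normL1_adj {u v : Fin d → ℤ} (h : (latticeGraph d).Adj u v) :
    normL1 v = normL1 u + 1 ∨ normL1 u = normL1 v + 1 := by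
  obtain ⟨i, s, hs, rfl⟩ := latticeGraph_adj_iff.mp h
  have := normL1_add_single u i s
  omega

noncomputable def towardZero (v : Fin d → ℤ) : Fin d → ℤ :=
  if h : ∃ i, v i ≠ 0 then v + Pi.single h.choose (-(v h.choose).sign) else v

theorem exists_towardZero_eq {v : Fin d → ℤ} (hv : v ≠ 0) :
    ∃ i, v i ≠ 0 ∧ towardZero v = v + Pi.single i (-(v i).sign) := by
  have h : ∃ i, v i ≠ 0 := by simpa [funext_iff] using hv
  exact ⟨h.choose, h.choose_spec, by simp [towardZero, h]⟩

theorem normL1_towardZero {v : Fin d → ℤ} (hv : v ≠ 0) :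
    normL1 (towardZero v) + 1 = normL1 v := by
  obtain ⟨i, hi, h⟩ := exists_towardZero_eq hv
  have := normL1_add_single v i (-(v i).sign)
  have := Int.natAbs_add_neg_sign hi
  rw [h]; omega

theorem adj_towardZero {v : Fin d → ℤ} (hv : v ≠ 0) : (latticeGraph d).Adj v (towardZero v) := by
  obtain ⟨i, hi, h⟩ := exists_towardZero_eq hv
  rw [h]
  exact latticeGraph_adj_add_single v i (Int.neg_sign_eq_one_or_neg_one hi)

theorem latticeGraph_reachable_zero (v : Fin d → ℤ) : (latticeGraph d).Reachable v 0 := by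
  induction h : normL1 v using Nat.strong_induction_on generalizing v with
  | _ N ih =>
    by_cases hv : v = 0
    · rw [hv]
    · have := normL1_towardZero hv
      exact (adj_towardZero hv).reachable.trans (ih _ (by omega) _ rfl)

theorem latticeGraph_connected : (latticeGraph d).Connected :=
  ⟨fun u v => (latticeGraph_reachable_zero u).trans (latticeGraph_reachable_zero v).symm⟩

theorem eq_univ_of_adj_mem {S : Set (Fin d → ℤ)} (hS : S.Nonempty)
    (h : ∀ u v, (latticeGraph d).Adj u v → u ∈ S → v ∈ S) : S = Set.univ := by
  obtain ⟨a, ha⟩ := hS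
  refine Set.eq_univ_of_forall fun v => ?_
  have := (latticeGraph_connected.preconnected a v).eq_of_forall_adj (f := (· ∈ S))
    fun u w huw => propext ⟨h u w huw, h w u huw.symm⟩
  exact this ▸ ha

theorem IsFourCycle.rotate {a b e f : Fin d → ℤ} (h : IsFourCycle d a b e f) :
    IsFourCycle d b e f a :=
  ⟨h.2.1, h.2.2.1, h.2.2.2.1, h.1, h.2.2.2.2.2, h.2.2.2.2.1.symm⟩

theorem IsFourCycle.reverse {a b e f : Fin d → ℤ} (h : IsFourCycle d a b e f) :
    IsFourCycle d a f e b :=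
  ⟨h.2.2.2.1.symm, h.2.2.1.symm, h.2.1.symm, h.1.symm, h.2.2.2.2.1, h.2.2.2.2.2.symm⟩

theorem towardZero_eq_or_exists_isFourCycle {v w : Fin d → ℤ} (hadj : (latticeGraph d).Adj v w)
    (hvw : normL1 w = normL1 v + 1) :
    towardZero w = v ∨ ∃ v', IsFourCycle d v' v w (towardZero w) ∧ normL1 v' + 1 = normL1 v := by
  obtain ⟨i, s, hs, hwv⟩ := latticeGraph_adj_iff.mp hadj
  have hw : w ≠ 0 := fun h => by simp [h, normL1_eq_zero.mpr] at hvw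
  obtain ⟨j, hj, htw⟩ := exists_towardZero_eq hw
  have hvi := normL1_add_single v i s
  rw [← hwv] at hvi
  by_cases hji : j = i
  · subst hji
    have hwj : w j = v j + s := by simp [hwv]
    have hsign : (w j).sign = s := hwj ▸ Int.sign_add_eq_of_natAbs_add hs (by omega)
    left
    rw [htw, hsign, hwv, add_assoc, ← Pi.single_add, add_neg_cancel, Pi.single_zero, add_zero]
  · right
    have hwj : w j = v j := by simp [hwv, Pi.single_eq_of_ne hji]
    have ht := Int.neg_sign_eq_one_or_neg_one hj
    have htw' : towardZero w = v + Pi.single j (-(w j).sign) + Pi.single i s := by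
      rw [htw, hwv, add_right_comm]
    refine ⟨v + Pi.single j (-(w j).sign), ⟨(latticeGraph_adj_add_single v j ht).symm, hadj,
      adj_towardZero hw, htw' ▸ (latticeGraph_adj_add_single _ i hs).symm, fun h => ?_,
      fun h => ?_⟩, ?_⟩
    · have := congrFun h i
      simp [hwv, Pi.single_eq_of_ne (Ne.symm hji)] at this
      omega
    · have := congrFun h j
      simp [htw, hwj] at this
      omega
    · have h1 := normL1_add_single v j (-(w j).sign)
      have h2 := Int.natAbs_add_neg_sign hj
      rw [hwj] at h1 h2 ⊢
      omega

set_option synthInstance.maxSize 1024 in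
theorem valMinAbs_add_of_square (α β γ δ : ZMod 4) (h1 : β - α ≠ 2) (h2 : γ - β ≠ 2)
    (h3 : δ - γ ≠ 2) (h4 : α - δ ≠ 2) :
    (β - α).valMinAbs + (γ - β).valMinAbs = (δ - α).valMinAbs + (γ - δ).valMinAbs ∨
      (β = α + 1 ∧ γ = α + 2 ∧ δ = α + 3) ∨ (δ = α + 1 ∧ γ = α + 2 ∧ β = α + 3) := by
  revert α β γ δ; decide

theorem valMinAbs_sub_of_consecutive (t a b : ZMod 4) (ha : a = t ∨ a = t + 1)
    (hb : b = t ∨ b = t + 1) :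
    (b - a).valMinAbs = (if b = t then 0 else 1) - (if a = t then 0 else 1) := by
  revert t a b; decide

structure NoWinding (c : (Fin d → ℤ) → ZMod 4) : Prop where
  sub_ne_two : ∀ u v, (latticeGraph d).Adj u v → c v - c u ≠ 2
  not_winding : ∀ a b e f, IsFourCycle d a b e f → c a = 0 → c b = 1 → c e = 2 → c f = 3 → False

namespace NoWinding

variable {c : (Fin d → ℤ) → ZMod 4}

theorem not_winding_of_add (hc : NoWinding c) {a b e f : Fin d → ℤ} (h : IsFourCycle d a b e f)
    (hb : c b = c a + 1) (he : c e = c a + 2) (hf : c f = c a + 3) : False := by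
  rcases (by decide : ∀ α : ZMod 4, α = 0 ∨ α = 1 ∨ α = 2 ∨ α = 3) (c a) with ha | ha | ha | ha <;>
    rw [ha] at hb he hf
  · exact hc.not_winding _ _ _ _ h ha hb he hf
  · exact hc.not_winding _ _ _ _ h.rotate.rotate.rotate hf ha hb he
  · exact hc.not_winding _ _ _ _ h.rotate.rotate he hf ha hb
  · exact hc.not_winding _ _ _ _ h.rotate hb he hf ha

theorem valMinAbs_add_valMinAbs (hc : NoWinding c) {a b e f : Fin d → ℤ}
    (h : IsFourCycle d a b e f) :
    (c b - c a).valMinAbs + (c e - c b).valMinAbs =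
      (c f - c a).valMinAbs + (c e - c f).valMinAbs := by
  have ⟨hab, hbe, hef, hfa, _⟩ := h
  rcases valMinAbs_add_of_square (c a) (c b) (c e) (c f) (hc.sub_ne_two _ _ hab)
    (hc.sub_ne_two _ _ hbe) (hc.sub_ne_two _ _ hef) (hc.sub_ne_two _ _ hfa) with
    hsq | ⟨hb, he, hf⟩ | ⟨hf, he, hb⟩
  · exact hsq
  · exact (hc.not_winding_of_add h hb he hf).elim
  · exact (hc.not_winding_of_add h.reverse hf he hb).elim

end NoWinding

noncomputable def liftToInt (c : (Fin d → ℤ) → ZMod 4) (v : Fin d → ℤ) : ℤ :=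
  if hv : v = 0 then 0 else
    have : normL1 (towardZero v) < normL1 v := by have := normL1_towardZero hv; omega
    liftToInt c (towardZero v) + (c v - c (towardZero v)).valMinAbs
termination_by normL1 v

section liftToInt

variable {c : (Fin d → ℤ) → ZMod 4}

theorem liftToInt_of_ne_zero {v : Fin d → ℤ} (hv : v ≠ 0) :
    liftToInt c v = liftToInt c (towardZero v) + (c v - c (towardZero v)).valMinAbs := by
  rw [liftToInt, dif_neg hv]

namespace NoWinding

theorem liftToInt_sub_of_normL1 (hc : NoWinding c) {v w : Fin d → ℤ}
    (hadj : (latticeGraph d).Adj v w) (hvw : normL1 w = normL1 v + 1) :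
    liftToInt c w - liftToInt c v = (c w - c v).valMinAbs := by
  induction h : normL1 v using Nat.strong_induction_on generalizing v w with
  | _ N ih =>
    have hw : w ≠ 0 := fun h => by simp [h, normL1_eq_zero.mpr] at hvw
    rw [liftToInt_of_ne_zero hw]
    rcases towardZero_eq_or_exists_isFourCycle hadj hvw with htw | ⟨v', hsq, hv'⟩
    · rw [htw]; ring
    · have h1 := ih _ (by omega) hsq.1 hv'.symm rfl
      have h2 := ih _ (by omega) hsq.2.2.2.1.symm
        (by have := normL1_towardZero hw; omega) rfl
      have := hc.valMinAbs_add_valMinAbs hsq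
      linarith

theorem liftToInt_sub (hc : NoWinding c) {v w : Fin d → ℤ} (hadj : (latticeGraph d).Adj v w) :
    liftToInt c w - liftToInt c v = (c w - c v).valMinAbs := by
  rcases normL1_adj hadj with h | h
  · exact hc.liftToInt_sub_of_normL1 hadj h
  · have := hc.liftToInt_sub_of_normL1 hadj.symm h
    rw [← neg_sub (c v), ZMod.valMinAbs_neg_of_ne_half]
    · linarith
    · exact (by decide : ∀ x : ZMod 4, x ≠ 2 → 2 * x.val ≠ 4) _ (hc.sub_ne_two _ _ hadj.symm)

theorem liftToInt_eq_add_one (hc : NoWinding c) {S : Set (Fin d → ℤ)}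
    (hS : ConnectedIn (latticeGraph d) S) {t : ZMod 4} (hcS : ∀ s ∈ S, c s = t ∨ c s = t + 1)
    {x y : Fin d → ℤ} (hx : x ∈ S) (hy : y ∈ S) (hcx : c x = t) (hcy : c y = t + 1) :
    liftToInt c y = liftToInt c x + 1 := by
  let f : S → ℤ := fun s => liftToInt c s - if c s = t then 0 else 1
  have hf : ∀ u v, ((latticeGraph d).induce S).Adj u v → f u = f v := by
    intro u v huv
    have := hc.liftToInt_sub (show (latticeGraph d).Adj u v from huv)
    rw [valMinAbs_sub_of_consecutive t _ _ (hcS u u.2) (hcS v v.2)] at this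
    simp only [f]
    linarith
  have := (hS.preconnected ⟨x, hx⟩ ⟨y, hy⟩).eq_of_forall_adj hf
  have ht : t + 1 ≠ t := by simpa using (by decide : (1 : ZMod 4) ≠ 0)
  simp only [f, hcx, hcy, if_pos, if_neg ht] at this
  linarith

end NoWinding

end liftToInt

open Classical in
/-- Numbers the quadrants `Aᶜ ∩ Bᶜ`, `Aᶜ ∩ B`, `A ∩ B`, `A ∩ Bᶜ` in the cyclic order of the
square forbidden by `BoundaryDisjoint`, which thus becomes a square winding once around `ZMod 4`. -/
noncomputable def quadrantCode (A B : Set (Fin d → ℤ)) (v : Fin d → ℤ) : ZMod 4 :=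
  if v ∈ A then (if v ∈ B then 2 else 3) else (if v ∈ B then 1 else 0)

section quadrantCode

variable {A B : Set (Fin d → ℤ)} {v : Fin d → ℤ}

theorem quadrantCode_eq_zero_iff : quadrantCode A B v = 0 ↔ v ∉ A ∧ v ∉ B := by
  by_cases hA : v ∈ A <;> by_cases hB : v ∈ B <;> simp [quadrantCode, hA, hB] <;> decide

theorem quadrantCode_eq_one_iff : quadrantCode A B v = 1 ↔ v ∉ A ∧ v ∈ B := by
  by_cases hA : v ∈ A <;> by_cases hB : v ∈ B <;> simp [quadrantCode, hA, hB] <;> decide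

theorem quadrantCode_eq_two_iff : quadrantCode A B v = 2 ↔ v ∈ A ∧ v ∈ B := by
  by_cases hA : v ∈ A <;> by_cases hB : v ∈ B <;> simp [quadrantCode, hA, hB] <;> decide

theorem quadrantCode_eq_three_iff : quadrantCode A B v = 3 ↔ v ∈ A ∧ v ∉ B := by
  by_cases hA : v ∈ A <;> by_cases hB : v ∈ B <;> simp [quadrantCode, hA, hB] <;> decide

end quadrantCode

theorem BoundaryDisjoint.noWinding {A B : Set (Fin d → ℤ)} (hbd : BoundaryDisjoint d A B) :
    NoWinding (quadrantCode A B) where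
  sub_ne_two u v huv h := by
    refine Set.eq_empty_iff_forall_notMem.mp hbd.1 (u, v) ⟨⟨huv, ?_⟩, ⟨huv, ?_⟩⟩ <;>
      by_cases hu : u ∈ A <;> by_cases hv : v ∈ A <;> by_cases hu' : u ∈ B <;>
      by_cases hv' : v ∈ B <;> simp_all [quadrantCode] <;> revert h <;> decide
  not_winding a b e f hcyc ha hb he hf :=
    hbd.2 ⟨a, b, e, f, hcyc, quadrantCode_eq_zero_iff.mp ha, quadrantCode_eq_one_iff.mp hb,
      quadrantCode_eq_two_iff.mp he, quadrantCode_eq_three_iff.mp hf⟩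

theorem BoundaryDisjoint.subset_or_subset {A B : Set (Fin d → ℤ)} (hbd : BoundaryDisjoint d A B)
    (hA : ConnectedIn (latticeGraph d) A) (hAc : ConnectedIn (latticeGraph d) Aᶜ)
    (hB : ConnectedIn (latticeGraph d) B) (hBc : ConnectedIn (latticeGraph d) Bᶜ)
    (h11 : (A ∩ B).Nonempty) (h00 : (Aᶜ ∩ Bᶜ).Nonempty) : A ⊆ B ∨ B ⊆ A := by
  by_contra! h
  obtain ⟨p, hpA, hpB⟩ := Set.not_subset.mp h.1
  obtain ⟨q, hqB, hqA⟩ := Set.not_subset.mp h.2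
  obtain ⟨w, hwA, hwB⟩ := h11
  obtain ⟨o, hoA, hoB⟩ := h00
  have hc := hbd.noWinding
  -- Along `w → p → o → q → w` the lift rises by one at each step, which is absurd.
  have hw := quadrantCode_eq_two_iff.mpr ⟨hwA, hwB⟩
  have hp := quadrantCode_eq_three_iff.mpr ⟨hpA, hpB⟩
  have ho := quadrantCode_eq_zero_iff.mpr ⟨hoA, hoB⟩
  have hq := quadrantCode_eq_one_iff.mpr ⟨hqA, hqB⟩
  have h1 := hc.liftToInt_eq_add_one hA (t := 2)
    (fun s hs => (em (s ∈ B)).imp (fun hsB => quadrantCode_eq_two_iff.mpr ⟨hs, hsB⟩)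
      (fun hsB => quadrantCode_eq_three_iff.mpr ⟨hs, hsB⟩)) hwA hpA hw hp
  have h2 := hc.liftToInt_eq_add_one hBc (t := 3)
    (fun s hs => (em (s ∈ A)).imp (fun hsA => quadrantCode_eq_three_iff.mpr ⟨hsA, hs⟩)
      (fun hsA => quadrantCode_eq_zero_iff.mpr ⟨hsA, hs⟩)) hpB hoB hp ho
  have h3 := hc.liftToInt_eq_add_one hAc (t := 0)
    (fun s hs => (em (s ∈ B)).symm.imp (fun hsB => quadrantCode_eq_zero_iff.mpr ⟨hs, hsB⟩)
      (fun hsB => quadrantCode_eq_one_iff.mpr ⟨hs, hsB⟩)) hoA hqA ho hq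
  have h4 := hc.liftToInt_eq_add_one hB (t := 1)
    (fun s hs => (em (s ∈ A)).symm.imp (fun hsA => quadrantCode_eq_one_iff.mpr ⟨hsA, hs⟩)
      (fun hsA => quadrantCode_eq_two_iff.mpr ⟨hsA, hs⟩)) hqB hwB hq hw
  omega

theorem ConnectedIn.vadd {S : Set (Fin d → ℤ)} (hS : ConnectedIn (latticeGraph d) S)
    (x : Fin d → ℤ) : ConnectedIn (latticeGraph d) (x +ᵥ S) := by
  let e : (latticeGraph d).induce S ≃g (latticeGraph d).induce (x +ᵥ S) :=
    ⟨Equiv.subtypeEquiv (Equiv.addLeft x) fun _ => (Set.vadd_mem_vadd_set_iff).symm,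
      latticeGraph_adj_vadd_iff⟩
  exact e.connected_iff.mp hS

theorem edgeBdry_compl (S : Set (Fin d → ℤ)) : edgeBdry d Sᶜ = edgeBdry d S := by
  ext p
  simp only [edgeBdry, Set.mem_ofPred_eq, Set.mem_compl_iff, not_not]
  tauto

theorem BoundaryDisjoint.compl {A B : Set (Fin d → ℤ)} (h : BoundaryDisjoint d A B) :
    BoundaryDisjoint d Aᶜ Bᶜ := by
  refine ⟨by rw [edgeBdry_compl, edgeBdry_compl]; exact h.1, ?_⟩
  rintro ⟨a, b, e, f, hcyc, ha, hb, he, hf⟩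
  simp only [compl_compl] at ha hb he hf
  exact h.2 ⟨e, f, a, b, hcyc.rotate.rotate, he, hf, ha, hb⟩

theorem BiConnected.compl {S : Set (Fin d → ℤ)} (h : BiConnected d S) : BiConnected d Sᶜ :=
  ⟨by simpa using h.2.1, by simpa using h.1, h.2.2.2, by simpa using h.2.2.1⟩

theorem mem_translates_iff {n : ℕ} {S W : Set (Fin d → ℤ)} :
    W ∈ translates n d S ↔ ∃ x : Fin d → ℤ, (∀ i, (n : ℤ) ∣ x i) ∧ W = x +ᵥ S := by
  simp only [translates, Set.mem_ofPred_eq, add_comm, ← vadd_eq_add, Set.image_vadd]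

theorem translates_compl (n : ℕ) (S : Set (Fin d → ℤ)) :
    translates n d Sᶜ = compl '' translates n d S := by
  ext W
  simp only [mem_translates_iff, Set.mem_image]
  constructor
  · rintro ⟨x, hx, rfl⟩
    exact ⟨x +ᵥ S, ⟨x, hx, rfl⟩, Set.vadd_set_compl.symm⟩
  · rintro ⟨_, ⟨x, hx, rfl⟩, rfl⟩
    exact ⟨x, hx, Set.vadd_set_compl.symm⟩

theorem TranslationRespecting.compl {n : ℕ} {S : Set (Fin d → ℤ)}
    (h : TranslationRespecting n d S) : TranslationRespecting n d Sᶜ := by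
  refine ⟨h.1.compl, ?_⟩
  rw [translates_compl]
  rintro _ ⟨A, hA, rfl⟩ _ ⟨B, hB, rfl⟩ hne
  exact (h.2 A hA B hB fun h => hne (h ▸ rfl)).compl

theorem pairwise_compl_inter_translates_iff {n : ℕ} {S : Set (Fin d → ℤ)} :
    (translates n d S).Pairwise (fun A B => Aᶜ ∩ Bᶜ = ∅) ↔
      (translates n d Sᶜ).Pairwise (fun A B => A ∩ B = ∅) := by
  rw [translates_compl, compl_injective.injOn.pairwise_image]

theorem BiConnected.vadd {S : Set (Fin d → ℤ)} (h : BiConnected d S) (x : Fin d → ℤ) :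
    BiConnected d (x +ᵥ S) :=
  ⟨by simpa using h.1, by simpa using h.2.1, h.2.2.1.vadd x,
    by simpa only [Set.vadd_set_compl] using h.2.2.2.vadd x⟩

theorem mem_of_adj_of_subset {S T : Set (Fin d → ℤ)} (hST : S ⊆ T)
    (hbd : edgeBdry d S ∩ edgeBdry d T = ∅) {u v : Fin d → ℤ} (huv : (latticeGraph d).Adj u v)
    (hu : u ∈ S) : v ∈ T := by
  by_contra hv
  exact Set.eq_empty_iff_forall_notMem.mp hbd (u, v)
    ⟨⟨huv, Or.inl ⟨hu, fun h => hv (hST h)⟩⟩, ⟨huv, Or.inl ⟨hST hu, hv⟩⟩⟩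

theorem eq_univ_of_subset_vadd {G W : Set (Fin d → ℤ)} {z : Fin d → ℤ} (hG : G.Nonempty)
    (hsub : G ⊆ z +ᵥ G) (hbd : edgeBdry d G ∩ edgeBdry d (z +ᵥ G) = ∅) (hGW : G ⊆ W)
    (hW : z +ᵥ W = W) : W = Set.univ := by
  have hstep : ∀ (k : ℕ) u v, (latticeGraph d).Adj u v → u ∈ (k • z) +ᵥ G →
      v ∈ ((k + 1) • z) +ᵥ G := by
    intro k u v huv hu
    rw [Set.mem_vadd_set_iff_neg_vadd_mem] at hu ⊢
    have := mem_of_adj_of_subset hsub hbd (latticeGraph_adj_vadd_iff.mpr huv) hu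
    rwa [Set.mem_vadd_set_iff_neg_vadd_mem, vadd_vadd, ← neg_add, add_comm, ← succ_nsmul] at this
  have hunion : ⋃ k : ℕ, (k • z) +ᵥ G = Set.univ := by
    refine eq_univ_of_adj_mem ⟨_, Set.mem_iUnion_of_mem 0 (by simpa using hG.some_mem)⟩ ?_
    simp only [Set.mem_iUnion]
    rintro u v huv ⟨k, hk⟩
    exact ⟨k + 1, hstep k u v huv hk⟩
  refine Set.eq_univ_of_univ_subset (hunion ▸ Set.iUnion_subset fun k => ?_)
  have hkW : (k • z) +ᵥ W = W := (AddAction.stabilizer _ W).nsmul_mem hW k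
  exact hkW ▸ Set.vadd_set_mono hGW

theorem eq_univ_of_vadd_subset_vadd {G W : Set (Fin d → ℤ)} {x y : Fin d → ℤ} (hG : G.Nonempty)
    (hsub : x +ᵥ G ⊆ y +ᵥ G) (hbd : edgeBdry d (x +ᵥ G) ∩ edgeBdry d (y +ᵥ G) = ∅)
    (hGW : G ⊆ W) (hW : x +ᵥ W = y +ᵥ W) : W = Set.univ := by
  have hyx : ∀ S : Set (Fin d → ℤ), (y - x) +ᵥ (x +ᵥ S) = y +ᵥ S := fun S => by
    rw [vadd_vadd, sub_add_cancel]
  rw [← Set.vadd_set_eq_univ (a := x)]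
  exact eq_univ_of_subset_vadd (hG.vadd_set) (hyx G ▸ hsub) (hyx G ▸ hbd)
    (Set.vadd_set_mono hGW) (hyx W ▸ hW.symm)

theorem TranslationRespecting.pairwise_inter_translates_eq_empty {n : ℕ}
    {U V : Set (Fin d → ℤ)} (hU : TranslationRespecting n d U) (hV : V ≠ Set.univ) (hUV : U ⊆ V)
    (hVdisj : (translates n d V).Pairwise (fun A B => A ∩ B = ∅)) :
    (translates n d U).Pairwise (fun A B => A ∩ B = ∅) := by
  intro U₁ hU₁ U₂ hU₂ hne
  obtain ⟨x, hx, rfl⟩ := mem_translates_iff.mp hU₁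
  obtain ⟨y, hy, rfl⟩ := mem_translates_iff.mp hU₂
  by_contra hmeet
  have hxV : x +ᵥ U ⊆ x +ᵥ V := Set.vadd_set_mono hUV
  have hyV : y +ᵥ U ⊆ y +ᵥ V := Set.vadd_set_mono hUV
  have hVxy : x +ᵥ V = y +ᵥ V := by
    by_contra hneV
    refine hmeet (Set.subset_empty_iff.mp ?_)
    rw [← hVdisj (mem_translates_iff.mpr ⟨x, hx, rfl⟩) (mem_translates_iff.mpr ⟨y, hy, rfl⟩) hneV]
    exact Set.inter_subset_inter hxV hyV
  have h00 : ((x +ᵥ U)ᶜ ∩ (y +ᵥ U)ᶜ).Nonempty := by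
    rw [Set.nonempty_iff_ne_empty, ← Set.compl_union, Ne, Set.compl_empty_iff]
    intro hcover
    refine hV ((Set.vadd_set_eq_univ (a := x)).mp (Set.eq_univ_of_univ_subset ?_))
    exact hcover ▸ Set.union_subset hxV (hVxy ▸ hyV)
  have hUne : U.Nonempty := Set.nonempty_iff_ne_empty.mpr hU.1.1
  have hbd := hU.2 _ hU₁ _ hU₂ hne
  obtain ⟨-, -, hUx, hUxc⟩ := hU.1.vadd x
  obtain ⟨-, -, hUy, hUyc⟩ := hU.1.vadd y
  rcases hbd.subset_or_subset hUx hUxc hUy hUyc (Set.nonempty_iff_ne_empty.mpr hmeet) h00 with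
    hsub | hsub
  · exact hV (eq_univ_of_vadd_subset_vadd hUne hsub hbd.1 hUV hVxy)
  · exact hV (eq_univ_of_vadd_subset_vadd hUne hsub (Set.inter_comm _ _ ▸ hbd.1) hUV hVxy.symm)

end P3C

theorem stmt11_general (n d : ℕ) (U V : Set (Fin d → ℤ))
    (hU : P3C.TranslationRespecting n d U) (hV : P3C.TranslationRespecting n d V)
    (hUV : U ⊆ V) :
    ((∀ U1 ∈ P3C.translates n d U, ∀ U2 ∈ P3C.translates n d U, U1 ≠ U2 → U1ᶜ ∩ U2ᶜ = ∅) →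
      (∀ V1 ∈ P3C.translates n d V, ∀ V2 ∈ P3C.translates n d V, V1 ≠ V2 → V1ᶜ ∩ V2ᶜ = ∅)) ∧
    ((∀ V1 ∈ P3C.translates n d V, ∀ V2 ∈ P3C.translates n d V, V1 ≠ V2 → V1 ∩ V2 = ∅) →
      (∀ U1 ∈ P3C.translates n d U, ∀ U2 ∈ P3C.translates n d U, U1 ≠ U2 → U1 ∩ U2 = ∅)) := by
  refine ⟨fun hUc => ?_, hU.pairwise_inter_translates_eq_empty hV.1.2.1 hUV⟩
  have := hV.compl.pairwise_inter_translates_eq_empty (by simpa using hU.1.1)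
    (Set.compl_subset_compl.mpr hUV) (P3C.pairwise_compl_inter_translates_iff.mp hUc)
  exact P3C.pairwise_compl_inter_translates_iff.mpr this

theorem stmt11 (n d : ℕ) (hn : 2 ≤ n) (U V : Set (Fin d → ℤ))
    (hU : P3C.TranslationRespecting n d U) (hV : P3C.TranslationRespecting n d V)
    (hUnt : (P3C.translates n d U).Nontrivial) (hVnt : (P3C.translates n d V).Nontrivial)
    (hUV : U ⊆ V) :
    ((∀ U1 ∈ P3C.translates n d U, ∀ U2 ∈ P3C.translates n d U, U1 ≠ U2 → U1ᶜ ∩ U2ᶜ = ∅) →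
      (∀ V1 ∈ P3C.translates n d V, ∀ V2 ∈ P3C.translates n d V, V1 ≠ V2 → V1ᶜ ∩ V2ᶜ = ∅)) ∧
    ((∀ V1 ∈ P3C.translates n d V, ∀ V2 ∈ P3C.translates n d V, V1 ≠ V2 → V1 ∩ V2 = ∅) →
      (∀ U1 ∈ P3C.translates n d U, ∀ U2 ∈ P3C.translates n d U, U1 ≠ U2 → U1 ∩ U2 = ∅)) :=
  stmt11_general n d U V hU hV hUV
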